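/- (Theorem 1, Essential Uniqueness.) For any given incentive profile u, if f and f̄ are both Wardrop equilibrium flows of a routing game with path-specific node costs (edge and base node costs nonnegative, continuous, nondecreasing), then their social costs coincide: C(f,u) = C(f̄,u). -/

import Mathlib

/-!
Both equilibria satisfy the variational inequality `C(f,u) ≤ Σ_p g_p c_p(f,u)` for every
feasible `g`. Adding the two instances gives `Σ_p (f_p - f̄_p)(c_p(f) - c_p(f̄)) ≤ 0`. Regrouping
by edges and nodes turns this sum into `Σ_e (f_e - f̄_e)(c_e(f_e) - c_e(f̄_e))` plus the analogous
node sum, whose terms are nonnegative by monotonicity; so every term vanishes, every edge and node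
cost is the same under `f` and `f̄`, hence so is every path cost, and the two variational
inequalities then bound each social cost by the other.
-/

open Set MeasureTheory intervalIntegral

section RoutingGame

variable {E V P : Type*} [Fintype E] [Fintype V] [Fintype P] [Nonempty P]
  [DecidableEq E] [DecidableEq V]

/-- Edge flow: total flow of paths containing edge `e`. -/
noncomputable def edgeFlow (pathE : P → Finset E) (f : P → ℝ) (e : E) : ℝ :=
  ∑ p ∈ Finset.univ.filter (fun p => e ∈ pathE p), f p

/-- Node flow: total flow of paths containing node `v`. -/
noncomputable def nodeFlow (pathV : P → Finset V) (f : P → ℝ) (v : V) : ℝ :=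
  ∑ p ∈ Finset.univ.filter (fun p => v ∈ pathV p), f p

/-- Feasible flows: nonnegative, summing to one. -/
def Feasible (f : P → ℝ) : Prop := (∀ p, 0 ≤ f p) ∧ ∑ p, f p = 1

/-- Path cost with additive path-specific node incentives. -/
noncomputable def pathCost (pathE : P → Finset E) (pathV : P → Finset V)
    (ce : E → ℝ → ℝ) (cv : V → ℝ → ℝ) (u : V → P → ℝ) (f : P → ℝ) (p : P) : ℝ :=
  (∑ e ∈ pathE p, ce e (edgeFlow pathE f e)) +
  (∑ v ∈ pathV p, (cv v (nodeFlow pathV f v) + u v p))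

/-- Wardrop equilibrium: every used path has minimal cost. -/
def IsWardrop (pathE : P → Finset E) (pathV : P → Finset V)
    (ce : E → ℝ → ℝ) (cv : V → ℝ → ℝ) (u : V → P → ℝ) (f : P → ℝ) : Prop :=
  ∀ p q : P, 0 < f p →
    pathCost pathE pathV ce cv u f p ≤ pathCost pathE pathV ce cv u f q

/-- The potential function `Φ(f,u)`. -/
noncomputable def potential (pathE : P → Finset E) (pathV : P → Finset V)
    (ce : E → ℝ → ℝ) (cv : V → ℝ → ℝ) (u : V → P → ℝ) (f : P → ℝ) : ℝ :=
  (∑ e, ∫ s in (0:ℝ)..(edgeFlow pathE f e), ce e s) +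
  (∑ v, ∫ s in (0:ℝ)..(nodeFlow pathV f v), cv v s) +
  (∑ p, f p * ∑ v ∈ pathV p, u v p)

/-- Social cost. -/
noncomputable def socialCost (pathE : P → Finset E) (pathV : P → Finset V)
    (ce : E → ℝ → ℝ) (cv : V → ℝ → ℝ) (u : V → P → ℝ) (f : P → ℝ) : ℝ :=
  ∑ p, f p * pathCost pathE pathV ce cv u f p

end RoutingGame

section MonotoneGap

variable {ι α : Type*} [CommRing α] [LinearOrder α] [IsStrictOrderedRing α]

lemma MonotoneOn.sub_mul_sub_apply_nonneg {c : α → α} {s : Set α} (hc : MonotoneOn c s)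
    {x y : α} (hx : x ∈ s) (hy : y ∈ s) : 0 ≤ (x - y) * (c x - c y) := by
  rw [mul_comm]
  exact (monovaryOn_id_iff.2 hc).sub_mul_sub_nonneg hy hx

variable [Fintype ι] {c : ι → α → α} {s : Set α} {x y : ι → α}

lemma sum_sub_mul_sub_apply_nonneg (hc : ∀ i, MonotoneOn (c i) s)
    (hx : ∀ i, x i ∈ s) (hy : ∀ i, y i ∈ s) :
    0 ≤ ∑ i, (x i - y i) * (c i (x i) - c i (y i)) :=
  Finset.sum_nonneg fun i _ => (hc i).sub_mul_sub_apply_nonneg (hx i) (hy i)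

lemma apply_eq_of_sum_sub_mul_sub_apply_nonpos (hc : ∀ i, MonotoneOn (c i) s)
    (hx : ∀ i, x i ∈ s) (hy : ∀ i, y i ∈ s)
    (h : ∑ i, (x i - y i) * (c i (x i) - c i (y i)) ≤ 0) (i : ι) :
    c i (x i) = c i (y i) := by
  have hzero := (Finset.sum_eq_zero_iff_of_nonneg fun j _ =>
    (hc j).sub_mul_sub_apply_nonneg (hx j) (hy j)).1
    (le_antisymm h (sum_sub_mul_sub_apply_nonneg hc hx hy)) i (Finset.mem_univ i)
  rcases mul_eq_zero.1 hzero with hxy | hcxy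
  · rw [sub_eq_zero.1 hxy]
  · exact sub_eq_zero.1 hcxy

end MonotoneGap

section Flows

variable {E V P : Type*} [Fintype P]

lemma Feasible.exists_pos {f : P → ℝ} (hf : Feasible f) : ∃ p, 0 < f p := by
  by_contra! h
  have : ∑ p, f p = 0 := Finset.sum_eq_zero fun p _ => le_antisymm (h p) (hf.1 p)
  linarith [hf.2]

variable [DecidableEq E] [DecidableEq V]

lemma edgeFlow_mem_Icc (pathE : P → Finset E) {f : P → ℝ} (hf : Feasible f) (e : E) :
    edgeFlow pathE f e ∈ Icc 0 1 :=
  ⟨Finset.sum_nonneg fun p _ => hf.1 p,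
    hf.2 ▸ Finset.sum_le_sum_of_subset_of_nonneg (Finset.filter_subset _ _) fun p _ _ => hf.1 p⟩

lemma nodeFlow_mem_Icc (pathV : P → Finset V) {f : P → ℝ} (hf : Feasible f) (v : V) :
    nodeFlow pathV f v ∈ Icc 0 1 :=
  edgeFlow_mem_Icc pathV hf v

lemma edgeFlow_sub (pathE : P → Finset E) (f g : P → ℝ) (e : E) :
    edgeFlow pathE (f - g) e = edgeFlow pathE f e - edgeFlow pathE g e :=
  Finset.sum_sub_distrib _ _

lemma nodeFlow_sub (pathV : P → Finset V) (f g : P → ℝ) (v : V) :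
    nodeFlow pathV (f - g) v = nodeFlow pathV f v - nodeFlow pathV g v :=
  edgeFlow_sub pathV f g v

lemma sum_mul_sum_eq_sum_edgeFlow_mul [Fintype E] (pathE : P → Finset E) (g : P → ℝ)
    (d : E → ℝ) :
    ∑ p, g p * ∑ e ∈ pathE p, d e = ∑ e, edgeFlow pathE g e * d e := by
  simp only [edgeFlow, Finset.mul_sum, Finset.sum_mul, Finset.sum_filter]
  rw [Finset.sum_comm]
  refine Finset.sum_congr rfl fun p _ => ?_
  simp only [ite_mul, zero_mul, Finset.sum_ite_mem, Finset.univ_inter]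

lemma sum_mul_sum_eq_sum_nodeFlow_mul [Fintype V] (pathV : P → Finset V) (g : P → ℝ)
    (d : V → ℝ) :
    ∑ p, g p * ∑ v ∈ pathV p, d v = ∑ v, nodeFlow pathV g v * d v :=
  sum_mul_sum_eq_sum_edgeFlow_mul pathV g d

end Flows

section Equilibrium

variable {E V P : Type*} [Fintype P] [DecidableEq E] [DecidableEq V]
  (pathE : P → Finset E) (pathV : P → Finset V) (ce : E → ℝ → ℝ) (cv : V → ℝ → ℝ)
  (u : V → P → ℝ)

lemma pathCost_sub_pathCost (f g : P → ℝ) (p : P) :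
    pathCost pathE pathV ce cv u f p - pathCost pathE pathV ce cv u g p =
      ∑ e ∈ pathE p, (ce e (edgeFlow pathE f e) - ce e (edgeFlow pathE g e)) +
        ∑ v ∈ pathV p, (cv v (nodeFlow pathV f v) - cv v (nodeFlow pathV g v)) := by
  simp only [pathCost, Finset.sum_sub_distrib, Finset.sum_add_distrib]
  ring

/-- The incentives `u` do not depend on the flow, so they cancel from the gap. -/
lemma sum_sub_mul_pathCost_sub [Fintype E] [Fintype V] (f g : P → ℝ) :
    ∑ p, (f p - g p) *
        (pathCost pathE pathV ce cv u f p - pathCost pathE pathV ce cv u g p) =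
      ∑ e, (edgeFlow pathE f e - edgeFlow pathE g e) *
          (ce e (edgeFlow pathE f e) - ce e (edgeFlow pathE g e)) +
        ∑ v, (nodeFlow pathV f v - nodeFlow pathV g v) *
          (cv v (nodeFlow pathV f v) - cv v (nodeFlow pathV g v)) := by
  have hswap_e := sum_mul_sum_eq_sum_edgeFlow_mul pathE (f - g)
    fun e => ce e (edgeFlow pathE f e) - ce e (edgeFlow pathE g e)
  have hswap_v := sum_mul_sum_eq_sum_nodeFlow_mul pathV (f - g)
    fun v => cv v (nodeFlow pathV f v) - cv v (nodeFlow pathV g v)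
  simp only [Pi.sub_apply, edgeFlow_sub, nodeFlow_sub] at hswap_e hswap_v
  simp only [pathCost_sub_pathCost, mul_add, Finset.sum_add_distrib, hswap_e, hswap_v]

variable {pathE pathV ce cv u}

lemma IsWardrop.socialCost_eq_pathCost {f : P → ℝ} (heq : IsWardrop pathE pathV ce cv u f)
    (hf : Feasible f) {p : P} (hp : 0 < f p) :
    socialCost pathE pathV ce cv u f = pathCost pathE pathV ce cv u f p := by
  have hterm : ∀ q, f q * pathCost pathE pathV ce cv u f q =
      f q * pathCost pathE pathV ce cv u f p := fun q => by
    rcases (hf.1 q).eq_or_lt with hq | hq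
    · rw [← hq, zero_mul, zero_mul]
    · rw [le_antisymm (heq q p hq) (heq p q hp)]
  rw [socialCost, Finset.sum_congr rfl fun q _ => hterm q, ← Finset.sum_mul, hf.2, one_mul]

/-- The variational inequality characterising Wardrop equilibria. -/
lemma IsWardrop.socialCost_le_sum_mul_pathCost {f g : P → ℝ}
    (heq : IsWardrop pathE pathV ce cv u f) (hf : Feasible f) (hg : Feasible g) :
    socialCost pathE pathV ce cv u f ≤ ∑ q, g q * pathCost pathE pathV ce cv u f q := by
  obtain ⟨p, hp⟩ := hf.exists_pos
  calc socialCost pathE pathV ce cv u f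
      = ∑ q, g q * pathCost pathE pathV ce cv u f p := by
        rw [heq.socialCost_eq_pathCost hf hp, ← Finset.sum_mul, hg.2, one_mul]
    _ ≤ ∑ q, g q * pathCost pathE pathV ce cv u f q :=
        Finset.sum_le_sum fun q _ => mul_le_mul_of_nonneg_left (heq p q hp) (hg.1 q)

lemma pathCost_eq_of_isWardrop [Fintype E] [Fintype V]
    (hce_mono : ∀ e, MonotoneOn (ce e) (Icc 0 1)) (hcv_mono : ∀ v, MonotoneOn (cv v) (Icc 0 1))
    {f g : P → ℝ} (hf : Feasible f) (hg : Feasible g)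
    (heqf : IsWardrop pathE pathV ce cv u f) (heqg : IsWardrop pathE pathV ce cv u g) :
    pathCost pathE pathV ce cv u f = pathCost pathE pathV ce cv u g := by
  have hgap : ∑ p, (f p - g p) *
      (pathCost pathE pathV ce cv u f p - pathCost pathE pathV ce cv u g p) ≤ 0 := by
    have hvi_f := heqf.socialCost_le_sum_mul_pathCost hf hg
    have hvi_g := heqg.socialCost_le_sum_mul_pathCost hg hf
    simp only [socialCost] at hvi_f hvi_g
    simp only [sub_mul, mul_sub, Finset.sum_sub_distrib]
    linarith
  rw [sum_sub_mul_pathCost_sub] at hgap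
  have hedge := sum_sub_mul_sub_apply_nonneg hce_mono (edgeFlow_mem_Icc pathE hf)
    (edgeFlow_mem_Icc pathE hg)
  have hnode := sum_sub_mul_sub_apply_nonneg hcv_mono (nodeFlow_mem_Icc pathV hf)
    (nodeFlow_mem_Icc pathV hg)
  have hce_eq := apply_eq_of_sum_sub_mul_sub_apply_nonpos hce_mono
    (edgeFlow_mem_Icc pathE hf) (edgeFlow_mem_Icc pathE hg) (by linarith)
  have hcv_eq := apply_eq_of_sum_sub_mul_sub_apply_nonpos hcv_mono
    (nodeFlow_mem_Icc pathV hf) (nodeFlow_mem_Icc pathV hg) (by linarith)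
  funext p
  simp only [pathCost, hce_eq, hcv_eq]

end Equilibrium

section RoutingGame

variable {E V P : Type*} [Fintype E] [Fintype V] [Fintype P] [Nonempty P]
  [DecidableEq E] [DecidableEq V]

theorem wardrop_socialCost_unique_general
    (pathE : P → Finset E) (pathV : P → Finset V)
    (ce : E → ℝ → ℝ) (cv : V → ℝ → ℝ) (u : V → P → ℝ)
    (hce_mono : ∀ e, MonotoneOn (ce e) (Set.Icc (0:ℝ) 1))
    (hcv_mono : ∀ v, MonotoneOn (cv v) (Set.Icc (0:ℝ) 1))
    (f fbar : P → ℝ) (hf : Feasible f) (hfbar : Feasible fbar)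
    (heqf : IsWardrop pathE pathV ce cv u f)
    (heqfbar : IsWardrop pathE pathV ce cv u fbar) :
    socialCost pathE pathV ce cv u f = socialCost pathE pathV ce cv u fbar := by
  have hcost := pathCost_eq_of_isWardrop hce_mono hcv_mono hf hfbar heqf heqfbar
  apply le_antisymm
  · calc socialCost pathE pathV ce cv u f
        ≤ ∑ p, fbar p * pathCost pathE pathV ce cv u f p :=
          heqf.socialCost_le_sum_mul_pathCost hf hfbar
      _ = socialCost pathE pathV ce cv u fbar := by rw [hcost, socialCost]
  · calc socialCost pathE pathV ce cv u fbar
        ≤ ∑ p, f p * pathCost pathE pathV ce cv u fbar p :=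
          heqfbar.socialCost_le_sum_mul_pathCost hfbar hf
      _ = socialCost pathE pathV ce cv u f := by rw [← hcost, socialCost]

/-- **Theorem 1, Essential Uniqueness.** Any two Wardrop equilibrium flows
have the same social cost. -/
theorem wardrop_socialCost_unique
    (pathE : P → Finset E) (pathV : P → Finset V)
    (ce : E → ℝ → ℝ) (cv : V → ℝ → ℝ) (u : V → P → ℝ)
    (hce_nn : ∀ e, ∀ x ∈ Set.Icc (0:ℝ) 1, 0 ≤ ce e x)
    (hce_cont : ∀ e, ContinuousOn (ce e) (Set.Icc (0:ℝ) 1))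
    (hce_mono : ∀ e, MonotoneOn (ce e) (Set.Icc (0:ℝ) 1))
    (hcv_nn : ∀ v, ∀ x ∈ Set.Icc (0:ℝ) 1, 0 ≤ cv v x)
    (hcv_cont : ∀ v, ContinuousOn (cv v) (Set.Icc (0:ℝ) 1))
    (hcv_mono : ∀ v, MonotoneOn (cv v) (Set.Icc (0:ℝ) 1))
    (f fbar : P → ℝ) (hf : Feasible f) (hfbar : Feasible fbar)
    (heqf : IsWardrop pathE pathV ce cv u f)
    (heqfbar : IsWardrop pathE pathV ce cv u fbar) :
    socialCost pathE pathV ce cv u f = socialCost pathE pathV ce cv u fbar :=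
  wardrop_socialCost_unique_general pathE pathV ce cv u hce_mono hcv_mono f fbar hf hfbar heqf
    heqfbar

end RoutingGame
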